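/- Let P be a probability measure on S and let 0 ≤ q < 1/3 be such that for every self-avoiding path Γ = (i₁, …, i_n) in ℤ² (of any length n ≥ 1 and any starting point), P(⋂_{k=1}^{n} {X_{i_k} = −1}) ≤ qⁿ. Then P-almost surely every site i ∈ ℤ² has a finite context, i.e., P({x ∈ S : for every i ∈ ℤ² there exists a finite L¹-connected set F ⊆ ℤ² with i ∈ int F and x_j = +1 for all j ∈ ∂F}) = 1. -/

import Mathlib

open MeasureTheory

/-- Sites of the lattice `ℤ²`. -/
abbrev Site : Type := ℤ × ℤ

/-- Configuration space `S = {-1,+1}^{ℤ²}`, where `false` encodes `-1` and `true` encodes `+1`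
(so that the order `false < true` corresponds to `-1 < +1`). -/
abbrev Conf : Type := Site → Bool

noncomputable section

/-- `ν` is the Bernoulli product measure on `S` under which the coordinates are i.i.d. with
`ν(X_i = -1) = ε` and `ν(X_i = +1) = 1 - ε`: we characterize it through its values on
cylinder sets. -/
def IsBernoulliProduct (ν : Measure Conf) (ε : ℝ) : Prop :=
  ∀ (Λ : Finset Site) (η : Site → Bool),
    ν {x | ∀ i ∈ Λ, x i = η i} =
      ∏ i ∈ Λ, ENNReal.ofReal (if η i = true then 1 - ε else ε)

/-- The pointwise minimum map `(x¹, x²) ↦ (i ↦ x¹_i ∧ x²_i)`. -/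
def minMap (p : Conf × Conf) : Conf := fun i => p.1 i && p.2 i

/-- The partially observed field `P^ε`: the pushforward of `μ ⊗ ν` under the pointwise
minimum map. -/
def Pe (μ ν : Measure Conf) : Measure Conf := (μ.prod ν).map minMap


/-- The `L¹`-distance `‖a - b‖₁` on `ℤ²`. -/
def L1dist (a b : Site) : ℤ := |a.1 - b.1| + |a.2 - b.2|

/-- A self-avoiding path of length `n` in `ℤ²`: a finite sequence `(i₁, …, i_n)` of sites
such that `i_j` and `i_k` are `L¹`-neighbors if and only if `|j - k| = 1`. -/
def IsSAPath {n : ℕ} (p : Fin n → Site) : Prop :=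
  ∀ j k : Fin n, L1dist (p j) (p k) = 1 ↔ |(j : ℤ) - (k : ℤ)| = 1

/-- The boundary `∂F = {j ∈ F : ∃ k ∉ F, ‖j - k‖₁ = 1}` of a set `F ⊆ ℤ²`. -/
def bdry (F : Set Site) : Set Site := {j ∈ F | ∃ k ∉ F, L1dist j k = 1}

/-- The interior `int F = F \ ∂F` of a set `F ⊆ ℤ²`. -/
def intr (F : Set Site) : Set Site := F \ bdry F

/-- `F` is `L¹`-connected: any two distinct points of `F` are joined by a finite path of
sites of `F` in which consecutive sites are `L¹`-neighbors. -/
def L1Connected (F : Set Site) : Prop :=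
  ∀ a ∈ F, ∀ b ∈ F, a ≠ b → ∃ n : ℕ, ∃ p : Fin (n + 1) → Site,
    p 0 = a ∧ p (Fin.last n) = b ∧ (∀ k, p k ∈ F) ∧
      ∀ k : Fin n, L1dist (p k.castSucc) (p k.succ) = 1

/-- Site `i` has a finite context in the configuration `x`: there is a finite
`L¹`-connected set `F ⊆ ℤ²` with `i ∈ int F` and `x_j = +1` for all `j ∈ ∂F`. -/
def HasFiniteContext (x : Conf) (i : Site) : Prop :=
  ∃ F : Set Site, F.Finite ∧ L1Connected F ∧ i ∈ intr F ∧ ∀ j ∈ bdry F, x j = true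

lemma l1_comm (a b : Site) : L1dist a b = L1dist b a := by simp [L1dist, abs_sub_comm]
lemma l1_self (a : Site) : L1dist a a = 0 := by simp [L1dist]
lemma l1_triangle (a b c : Site) : L1dist a c ≤ L1dist a b + L1dist b c := by
  simp only [L1dist]; have h1 := abs_sub_le a.1 b.1 c.1; have h2 := abs_sub_le a.2 b.2 c.2; linarith

/-- A walk of `L ≥ 1` sites, all `-1`, starting adjacent to `i`. -/
def IsWalk (x : Conf) (i : Site) (f : ℕ → Site) (L : ℕ) : Prop :=
  1 ≤ L ∧ L1dist i (f 0) = 1 ∧ (∀ k, k + 1 < L → L1dist (f k) (f (k+1)) = 1) ∧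
    (∀ k, k < L → x (f k) = false)

def Reach (x : Conf) (i j : Site) : Prop := ∃ L f, IsWalk x i f L ∧ f (L-1) = j

lemma walk_vertex_reach {x i f L} (hw : IsWalk x i f L) : ∀ t, t < L → Reach x i (f t) := by
  intro t ht
  obtain ⟨h1, h2, h3, h4⟩ := hw
  exact ⟨t+1, f, ⟨by omega, h2, fun k hk => h3 k (by omega), fun k hk => h4 k (by omega)⟩, by simp⟩

lemma walk_dist {x i f L} (hw : IsWalk x i f L) : ∀ k, k < L → L1dist (f 0) (f k) ≤ (k : ℤ) := by
  intro k
  induction k with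
  | zero => intro _; simp [l1_self]
  | succ k ih =>
    intro hk
    have h1 := ih (by omega)
    have h2 := hw.2.2.1 k (by omega)
    have h3 := l1_triangle (f 0) (f k) (f (k+1))
    push_cast
    linarith

lemma reach_good {x : Conf} {i j : Site} (h : Reach x i j) :
    ∃ L f, IsWalk x i f L ∧ f (L-1) = j ∧
      (∀ a b, a < b → b < L → f a ≠ f b) ∧
      (∀ a b, a < b → b < L → (L1dist (f a) (f b) = 1 ↔ b = a + 1)) := by
  classical
  have hQ : ∃ L, ∃ f, IsWalk x i f L ∧ f (L-1) = j := by
    obtain ⟨L, f, hw, he⟩ := h; exact ⟨L, f, hw, he⟩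
  obtain ⟨f, hw, he⟩ := Nat.find_spec hQ
  set L := Nat.find hQ with hLdef
  have hmin : ∀ L', L' < L → ¬ ∃ f, IsWalk x i f L' ∧ f (L'-1) = j :=
    fun L' h' => Nat.find_min hQ h'
  clear hLdef
  clear_value L
  obtain ⟨hL1, hadj0, hchain, hminus⟩ := hw
  have splice : ∀ a g : ℕ, 1 ≤ g → a + g < L →
      (a + 1 + g < L → L1dist (f a) (f (a+1+g)) = 1) →
      (a + g = L - 1 → f a = j) → False := by
    intro a g hg hag hadj hA
    apply hmin (L - g) (by omega)
    refine ⟨fun k => if k ≤ a then f k else f (k + g), ⟨by omega, ?_, ?_, ?_⟩, ?_⟩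
    · simp only [if_pos (Nat.zero_le a)]; exact hadj0
    · intro k hk
      by_cases h1 : k + 1 ≤ a
      · simp only [if_pos (show k ≤ a by omega), if_pos h1]; exact hchain k (by omega)
      · by_cases h2 : k ≤ a
        · have hka : k = a := by omega
          rw [hka]
          simp only [if_pos (le_refl a), if_neg (show ¬ a + 1 ≤ a by omega)]
          exact hadj (by omega)
        · simp only [if_neg h2, if_neg (show ¬ k + 1 ≤ a by omega)]
          have he1 : k + 1 + g = (k + g) + 1 := by omega
          rw [he1]
          exact hchain (k + g) (by omega)
    · intro k hk
      by_cases h2 : k ≤ a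
      · simp only [if_pos h2]; exact hminus k (by omega)
      · simp only [if_neg h2]; exact hminus (k + g) (by omega)
    · by_cases hLa : L - g - 1 ≤ a
      · have ha' : L - g - 1 = a := by omega
        simp only [ha', if_pos (le_refl a)]
        exact hA (by omega)
      · simp only [if_neg hLa]
        have he2 : L - g - 1 + g = L - 1 := by omega
        rw [he2]; exact he
  refine ⟨L, f, ⟨hL1, hadj0, hchain, hminus⟩, he, ?_, ?_⟩
  · intro a b hab hbL heq
    apply splice a (b - a) (by omega) (by omega)
    · intro hlt
      rw [show a + 1 + (b - a) = b + 1 from by omega, heq]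
      exact hchain b (by omega)
    · intro hend
      rw [heq, show b = L - 1 from by omega]
      exact he
  · intro a b hab hbL
    constructor
    · intro hd
      by_contra hne
      apply splice a (b - a - 1) (by omega) (by omega)
      · intro _
        rw [show a + 1 + (b - a - 1) = b from by omega]
        exact hd
      · intro hcon; exact absurd hcon (by omega)
    · intro hb1; rw [hb1]; exact hchain a (by omega)
lemma absNatIff (a b : ℕ) : |(a:ℤ) - (b:ℤ)| = 1 ↔ (a = b+1 ∨ b = a+1) := by
  rcases abs_cases ((a:ℤ) - (b:ℤ)) with ⟨h1, h2⟩ | ⟨h1, h2⟩ <;> rw [h1] <;> omega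

lemma ballFinite (i : Site) (N : ℤ) : {j : Site | L1dist i j ≤ N}.Finite := by
  apply Set.Finite.subset ((Set.finite_Icc (i.1 - N) (i.1 + N)).prod (Set.finite_Icc (i.2 - N) (i.2 + N)))
  intro j hj
  simp only [Set.mem_setOf_eq, L1dist] at hj
  have h1 := abs_nonneg (i.1 - j.1); have h2 := abs_nonneg (i.2 - j.2)
  have e1 := abs_le.mp (show |i.1 - j.1| ≤ N by linarith)
  have e2 := abs_le.mp (show |i.2 - j.2| ≤ N by linarith)
  constructor <;> simp only [Set.mem_Icc] <;> constructor <;> linarith [e1.1, e1.2, e2.1, e2.2]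

/-- If there is no "bad" self-avoiding all-minus path of length `m+1` starting next to `i`,
then `i` has a finite context in `x`. -/
lemma no_bad_context (x : Conf) (i : Site) (m : ℕ)
    (hnb : ¬ ∃ p : Fin (m+1) → Site, IsSAPath p ∧ Function.Injective p ∧
      L1dist i (p 0) = 1 ∧ ∀ k, x (p k) = false) :
    HasFiniteContext x i := by
  classical
  set C : Set Site := {j | Reach x i j} with hC
  -- every reachable site is at distance ≤ m+1 from i
  have hCb : ∀ j ∈ C, L1dist i j ≤ (m : ℤ) + 1 := by
    intro j hj
    obtain ⟨L, f, hw, hend, hinj, hiff⟩ := reach_good hj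
    have hLn : L < m + 1 := by
      by_contra hLn
      push_neg at hLn
      apply hnb
      refine ⟨fun k => f (k : ℕ), ?_, ?_, ?_, ?_⟩
      · intro a b
        rcases lt_trichotomy a b with hab | hab | hab
        · rw [hiff a b (by exact_mod_cast hab) (by omega), absNatIff]
          have : (a : ℕ) < (b : ℕ) := hab
          omega
        · subst hab
          rw [l1_self]
          simp
        · rw [l1_comm, abs_sub_comm, hiff b a (by exact_mod_cast hab) (by omega), absNatIff]
          have : (b : ℕ) < (a : ℕ) := hab
          omega
      · intro a b hfab
        by_contra hne
        rcases lt_trichotomy a b with hab | hab | hab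
        · exact hinj a b (by exact_mod_cast hab) (by omega) hfab
        · exact hne hab
        · exact hinj b a (by exact_mod_cast hab) (by omega) hfab.symm
      · exact hw.2.1
      · intro k; exact hw.2.2.2 k (by omega)
    have h1 := hw.2.1
    have h2 := walk_dist hw (L-1) (by have := hw.1; omega)
    have h3 := l1_triangle i (f 0) (f (L-1))
    have h4 : ((L - 1 : ℕ) : ℤ) ≤ (m : ℤ) := by omega
    rw [hend] at h3 h2
    linarith
  have hCfin : C.Finite := (ballFinite i ((m:ℤ)+1)).subset hCb
  set D : Set Site := insert i C with hD
  set F : Set Site := D ∪ {j | ∃ d ∈ D, L1dist d j = 1} with hF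
  have hiF : i ∈ F := Or.inl (Set.mem_insert i C)
  have hCF : C ⊆ F := fun j hj => Or.inl (Set.mem_insert_of_mem i hj)
  have hDF : D ⊆ F := fun j hj => Or.inl hj
  -- a minus site adjacent to D is reachable
  have hfalse : ∀ j : Site, x j = false → (∃ d ∈ D, L1dist d j = 1) → j ∈ C := by
    rintro j hxj ⟨d, hd, hdj⟩
    rcases hd with hd | hd
    · subst hd
      exact ⟨1, fun _ => j, ⟨le_rfl, hdj, fun k hk => by omega, fun k hk => hxj⟩, rfl⟩
    · obtain ⟨L, f, hw, hend⟩ := hd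
      obtain ⟨hL1, hadj0, hchain, hminus⟩ := hw
      refine ⟨L + 1, fun k => if k < L then f k else j, ⟨by omega, ?_, ?_, ?_⟩, ?_⟩
      · simp only [if_pos (show 0 < L by omega)]; exact hadj0
      · intro k hk
        by_cases h1 : k + 1 < L
        · simp only [if_pos h1, if_pos (show k < L by omega)]
          exact hchain k h1
        · have hkL : k = L - 1 := by omega
          simp only [if_pos (show k < L by omega), if_neg h1]
          rw [hkL, hend]
          exact hdj
      · intro k hk
        by_cases h1 : k < L
        · simp only [if_pos h1]; exact hminus k h1
        · simp only [if_neg h1]; exact hxj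
      · simp only [Nat.add_sub_cancel, if_neg (lt_irrefl L)]
  -- F is finite
  have hFfin : F.Finite := by
    apply (ballFinite i ((m:ℤ)+2)).subset
    rintro j (hj | ⟨d, hd, hdj⟩)
    · rcases hj with hj | hj
      · subst hj; simp only [Set.mem_setOf_eq, l1_self]; omega
      · have := hCb j hj; simp only [Set.mem_setOf_eq]; linarith
    · have h3 := l1_triangle i d j
      have h4 : L1dist i d ≤ (m : ℤ) + 1 := by
        rcases hd with hd | hd
        · subst hd; rw [l1_self]; omega
        · exact hCb d hd
      simp only [Set.mem_setOf_eq]; linarith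
  -- paths from i to each element of F, within F (ℕ-indexed)
  have hPathD : ∀ a ∈ D, ∃ M : ℕ, ∃ g : ℕ → Site, g 0 = i ∧ g M = a ∧
      (∀ k, k ≤ M → g k ∈ F) ∧ (∀ k, k < M → L1dist (g k) (g (k+1)) = 1) := by
    rintro a (ha | ha)
    · exact ⟨0, fun _ => i, ha ▸ rfl, ha ▸ rfl, fun k _ => ha ▸ hiF, fun k hk => by omega⟩
    · obtain ⟨L, f, hw, hend⟩ := ha
      have hL1 := hw.1
      refine ⟨L, fun k => if k = 0 then i else f (k - 1), by simp, ?_, ?_, ?_⟩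
      · simp only [if_neg (show L ≠ 0 by omega)]; exact hend
      · intro k hk
        by_cases h0 : k = 0
        · simp only [if_pos h0]; exact hiF
        · simp only [if_neg h0]
          exact hCF (walk_vertex_reach hw (k - 1) (by omega))
      · intro k hk
        by_cases h0 : k = 0
        · subst h0
          simp only [if_pos rfl, if_neg (one_ne_zero)]
          exact hw.2.1
        · simp only [if_neg h0, if_neg (show k + 1 ≠ 0 by omega)]
          have : k - 1 + 1 = k := by omega
          have hc := hw.2.2.1 (k - 1) (by omega)
          rw [this] at hc
          have : k + 1 - 1 = k := by omega
          rw [this]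
          exact hc
  have hPath : ∀ a ∈ F, ∃ M : ℕ, ∃ g : ℕ → Site, g 0 = i ∧ g M = a ∧
      (∀ k, k ≤ M → g k ∈ F) ∧ (∀ k, k < M → L1dist (g k) (g (k+1)) = 1) := by
    rintro a (ha | ⟨d, hd, hda⟩)
    · exact hPathD a ha
    · obtain ⟨M, g, hg0, hgM, hgF, hgs⟩ := hPathD d hd
      refine ⟨M + 1, fun k => if k ≤ M then g k else a, by simp [hg0], ?_, ?_, ?_⟩
      · simp only [if_neg (show ¬ M + 1 ≤ M by omega)]
      · intro k hk
        by_cases h1 : k ≤ M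
        · simp only [if_pos h1]; exact hgF k h1
        · simp only [if_neg h1]
          exact Or.inr ⟨d, hd, hda⟩
      · intro k hk
        by_cases h1 : k + 1 ≤ M
        · simp only [if_pos h1, if_pos (show k ≤ M by omega)]
          exact hgs k (by omega)
        · have hkM : k = M := by omega
          simp only [if_pos (show k ≤ M from by omega), if_neg h1]
          rw [hkM, hgM]
          exact hda
  refine ⟨F, hFfin, ?_, ?_, ?_⟩
  · -- L1Connected
    intro a ha b hb hab
    obtain ⟨Ma, ga, ha0, haM, haF, has⟩ := hPath a ha
    obtain ⟨Mb, gb, hb0, hbM, hbF, hbs⟩ := hPath b hb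
    set g : ℕ → Site := fun k => if k ≤ Ma then ga (Ma - k) else gb (k - Ma) with hgdef
    refine ⟨Ma + Mb, fun k => g (k : ℕ), ?_, ?_, ?_, ?_⟩
    · simp only [hgdef, Fin.val_zero, if_pos (Nat.zero_le Ma), Nat.sub_zero]
      exact haM
    · simp only [hgdef, Fin.val_last]
      by_cases h1 : Mb = 0
      · subst h1
        simp only [Nat.add_zero, if_pos le_rfl, Nat.sub_self]
        rw [ha0, ← hb0, ← hbM]
      · simp only [if_neg (show ¬ Ma + Mb ≤ Ma by omega), Nat.add_sub_cancel_left]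
        exact hbM
    · intro k
      simp only [hgdef]
      by_cases h1 : (k : ℕ) ≤ Ma
      · simp only [if_pos h1]; exact haF (Ma - (k:ℕ)) (by omega)
      · simp only [if_neg h1]; exact hbF ((k:ℕ) - Ma) (by omega)
    · intro k
      have hklt : (k : ℕ) < Ma + Mb := k.isLt
      simp only [hgdef, Fin.coe_castSucc, Fin.val_succ]
      by_cases h1 : (k : ℕ) + 1 ≤ Ma
      · simp only [if_pos h1, if_pos (show (k:ℕ) ≤ Ma by omega)]
        rw [l1_comm]
        have hc := has (Ma - (k : ℕ) - 1) (by omega)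
        have e1 : Ma - (k:ℕ) - 1 + 1 = Ma - (k:ℕ) := by omega
        have e2 : Ma - ((k:ℕ) + 1) = Ma - (k:ℕ) - 1 := by omega
        rw [e1] at hc
        rw [e2]
        exact hc
      · by_cases h2 : (k : ℕ) ≤ Ma
        · have hkMa : (k : ℕ) = Ma := by omega
          simp only [if_pos h2, if_neg h1, hkMa, Nat.sub_self, Nat.add_sub_cancel_left]
          rw [ha0, ← hb0]
          simp only [ite_self, if_neg (show ¬ Ma + 1 ≤ Ma by omega)]
          exact hbs 0 (by omega)
        · simp only [if_neg h2, if_neg (show ¬ (k:ℕ) + 1 ≤ Ma by omega)]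
          have hc := hbs ((k:ℕ) - Ma) (by omega)
          have e1 : (k:ℕ) + 1 - Ma = (k:ℕ) - Ma + 1 := by omega
          rw [e1]
          exact hc
  · -- interior
    refine ⟨hiF, ?_⟩
    rintro ⟨_, k, hkF, hik⟩
    exact hkF (Or.inr ⟨i, Set.mem_insert i C, hik⟩)
  · -- boundary is +1
    rintro j ⟨hjF, k, hkF, hjk⟩
    by_cases hjD : j ∈ D
    · exact absurd (Or.inr ⟨j, hjD, hjk⟩) hkF
    · cases hxj : x j with
      | true => rfl
      | false =>
        rcases hjF with hjD' | hjn
        · exact absurd hjD' hjD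
        · exact absurd (Set.mem_insert_of_mem i (hfalse j hxj hjn)) hjD
def dirs : Finset Site := {(1,0), (-1,0), (0,1), (0,-1)}

def nbhd (i : Site) : Finset Site := {(i.1+1,i.2), (i.1-1,i.2), (i.1,i.2+1), (i.1,i.2-1)}

lemma mem_nbhd {i a : Site} (h : L1dist i a = 1) : a ∈ nbhd i := by
  simp only [L1dist] at h
  simp only [nbhd, Finset.mem_insert, Finset.mem_singleton, Prod.ext_iff]
  rcases abs_cases (i.1 - a.1) with ⟨h1, h2⟩ | ⟨h1, h2⟩ <;>
    rcases abs_cases (i.2 - a.2) with ⟨h3, h4⟩ | ⟨h3, h4⟩ <;> omega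

lemma nbhd_card (i : Site) : (nbhd i).card ≤ 4 := by
  refine le_trans (Finset.card_insert_le _ _) ?_
  refine le_trans (Nat.add_le_add_right (Finset.card_insert_le _ _) 1) ?_
  refine le_trans (Nat.add_le_add_right (Nat.add_le_add_right (Finset.card_insert_le _ _) 1) 1) ?_
  simp

lemma step_dirs {a b : Site} (h : L1dist a b = 1) : b - a ∈ dirs := by
  simp only [L1dist] at h
  simp only [dirs, Finset.mem_insert, Finset.mem_singleton, Prod.ext_iff, Prod.fst_sub,
    Prod.snd_sub]
  rcases abs_cases (a.1 - b.1) with ⟨h1, h2⟩ | ⟨h1, h2⟩ <;>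
    rcases abs_cases (a.2 - b.2) with ⟨h3, h4⟩ | ⟨h3, h4⟩ <;> omega

lemma dirs_card : dirs.card = 4 := by decide

lemma dirs_neg {v : Site} (h : v ∈ dirs) : -v ∈ dirs := by
  fin_cases h <;> decide

noncomputable def walkOf (s : Site) (d : ℕ → Site) : ℕ → Site
  | 0 => s
  | (k+1) => walkOf s d k + d k

open Classical in
/-- Non-backtracking direction sequences. -/
noncomputable def NBF (m : ℕ) : Finset (Fin m → Site) :=
  (Fintype.piFinset fun _ => dirs).filter
    (fun d => ∀ k : ℕ, ∀ h : k + 1 < m, d ⟨k+1, h⟩ + d ⟨k, by omega⟩ ≠ 0)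

open Classical in
lemma NBF_subset (m : ℕ) : NBF m ⊆ Fintype.piFinset (fun _ : Fin m => dirs) :=
  Finset.filter_subset _ _

open Classical in
lemma NBF_mem {m : ℕ} {d : Fin m → Site} (hd : d ∈ NBF m) :
    (∀ j, d j ∈ dirs) ∧ ∀ k : ℕ, ∀ h : k + 1 < m, d ⟨k+1, h⟩ + d ⟨k, by omega⟩ ≠ 0 := by
  have h := Finset.mem_filter.mp hd
  exact ⟨Fintype.mem_piFinset.mp h.1, h.2⟩

open Classical in
lemma NBF_mem' {m : ℕ} {d : Fin m → Site} (h1 : ∀ j, d j ∈ dirs)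
    (h2 : ∀ k : ℕ, ∀ h : k + 1 < m, d ⟨k+1, h⟩ + d ⟨k, by omega⟩ ≠ 0) : d ∈ NBF m := by
  exact Finset.mem_filter.mpr ⟨Fintype.mem_piFinset.mpr h1, h2⟩

lemma NBF_card : ∀ m : ℕ, (NBF m).card ≤ 4 * 3 ^ m := by
  classical
  have key : ∀ m : ℕ, 1 ≤ m → (NBF (m+1)).card ≤ 3 * (NBF m).card := by
    intro m hm
    apply Finset.card_le_mul_card_image_of_maps_to (f := fun s => s ∘ Fin.castSucc)
    · intro s hs
      obtain ⟨hs1, hs2⟩ := NBF_mem hs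
      exact NBF_mem' (fun j => hs1 _) (fun k hk => hs2 k (by omega))
    · intro d₀ hd₀'
      have hd₀ := NBF_mem hd₀'
      have hlast : (m : ℕ) - 1 + 1 = m := by omega
      classical
      apply le_trans (Finset.card_le_card_of_injOn (fun s => s (Fin.last m))
        (t := dirs.erase (-(d₀ ⟨m - 1, by omega⟩))) ?_ ?_)
      · rw [Finset.card_erase_of_mem (dirs_neg (hd₀.1 _)), dirs_card]
      · intro s hs
        rw [Finset.mem_coe, Finset.mem_filter] at hs
        obtain ⟨hs', hs3⟩ := hs
        obtain ⟨hs1, hs2⟩ := NBF_mem hs'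
        rw [Finset.mem_coe, Finset.mem_erase]
        constructor
        · have hcon := hs2 (m - 1) (by omega)
          have he : s ⟨m - 1 + 1, by omega⟩ = s (Fin.last m) := by
            congr 1
            ext; simp [hlast]
          have he2 : s ⟨m - 1, by omega⟩ = d₀ ⟨m - 1, by omega⟩ := congrFun hs3 ⟨m - 1, by omega⟩
          rw [he, he2] at hcon
          intro hne
          have hne' : s (Fin.last m) = -(d₀ ⟨m - 1, by omega⟩) := hne
          exact hcon (by rw [hne']; simp)
        · exact hs1 _
      · intro s₁ hs₁ s₂ hs₂ hval
        simp only [Finset.mem_coe, Finset.mem_filter] at hs₁ hs₂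

        funext k
        by_cases hk : (k : ℕ) < m
        · have h1 := congrFun hs₁.2 ⟨k, hk⟩
          have h2 := congrFun hs₂.2 ⟨k, hk⟩
          simp only [Function.comp_apply] at h1 h2
          have hcast : Fin.castSucc ⟨(k : ℕ), hk⟩ = k := by ext; simp
          rw [hcast] at h1 h2
          rw [h1, h2]
        · have hkl : k = Fin.last m := by
            ext; simp; omega
          rw [hkl]; exact hval
  intro m
  induction m with
  | zero =>
    refine le_trans (Finset.card_le_card (NBF_subset 0)) ?_
    rw [Fintype.card_piFinset]
    simp
  | succ m ih =>
    by_cases hm : 1 ≤ m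
    · calc (NBF (m+1)).card ≤ 3 * (NBF m).card := key m hm
        _ ≤ 3 * (4 * 3 ^ m) := by omega
        _ = 4 * 3 ^ (m+1) := by ring
    · have hm0 : m = 0 := by omega
      subst hm0
      refine le_trans (Finset.card_le_card (NBF_subset 1)) ?_
      rw [Fintype.card_piFinset]
      simp [dirs_card]
lemma abs_self_sub_succ (z : ℤ) : |z - (z+1)| = 1 := by
  rw [show z - (z+1) = -1 by ring]
  decide

lemma walkOf_encode (m : ℕ) (p : Fin (m+1) → Site) (k : ℕ) (hk : k ≤ m) :
    walkOf (p 0) (fun t => if h : t < m then p ⟨t+1, by omega⟩ - p ⟨t, by omega⟩ else 0) k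
      = p ⟨k, by omega⟩ := by
  induction k with
  | zero =>
    have h0 : (⟨0, by omega⟩ : Fin (m+1)) = 0 := by ext; simp
    rw [h0]
    rfl
  | succ k ih =>
    show walkOf (p 0) _ k + _ = _
    rw [ih (by omega)]
    simp only [dif_pos (show k < m by omega)]
    abel

noncomputable def decPath (m : ℕ) (c : Site × (Fin m → Site)) : Fin (m+1) → Site :=
  fun k => walkOf c.1 (fun t => if h : t < m then c.2 ⟨t, h⟩ else 0) (k : ℕ)

lemma decPath_encode (m : ℕ) (p : Fin (m+1) → Site) :
    decPath m (p 0, fun j => p j.succ - p j.castSucc) = p := by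
  funext k
  exact walkOf_encode m p (k : ℕ) (by omega)


theorem statement7 (P : Measure Conf) [IsProbabilityMeasure P] (q : ℝ)
    (hq0 : 0 ≤ q) (hq : q < 1 / 3)
    (hbound : ∀ (n : ℕ), 1 ≤ n → ∀ p : Fin n → Site, IsSAPath p →
      P {x | ∀ k, x (p k) = false} ≤ ENNReal.ofReal (q ^ n)) :
    P {x | ∀ i : Site, HasFiniteContext x i} = 1 := by
  classical
  have key : ∀ i : Site, P {x | ¬ HasFiniteContext x i} = 0 := by
    intro i
    have hbnd : ∀ m : ℕ, P {x | ¬ HasFiniteContext x i} ≤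
        ENNReal.ofReal ((16 * q) * (3 * q) ^ m) := by
      intro m
      set Codes : Finset (Site × (Fin m → Site)) := (nbhd i) ×ˢ (NBF m) with hCodes
      have hsub : {x : Conf | ¬ HasFiniteContext x i} ⊆
          ⋃ c ∈ Codes, {x : Conf | IsSAPath (decPath m c) ∧ ∀ k, x (decPath m c k) = false} := by
        intro x hx
        simp only [Set.mem_setOf_eq] at hx
        have hex : ∃ p : Fin (m+1) → Site, IsSAPath p ∧ Function.Injective p ∧
            L1dist i (p 0) = 1 ∧ ∀ k, x (p k) = false := by
          by_contra hcon
          exact hx (no_bad_context x i m hcon)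
        obtain ⟨p, hsa, hinj, hadj, hmin⟩ := hex
        set c : Site × (Fin m → Site) := (p 0, fun j => p j.succ - p j.castSucc) with hc
        have hdecc : decPath m c = p := decPath_encode m p
        have hcC : c ∈ Codes := by
          rw [hCodes, Finset.mem_product]
          refine ⟨mem_nbhd hadj, NBF_mem' ?_ ?_⟩
          · intro j
            have hstep : L1dist (p j.castSucc) (p j.succ) = 1 := by
              refine (hsa _ _).mpr ?_
              simp only [Fin.coe_castSucc, Fin.val_succ]
              push_cast
              exact abs_self_sub_succ _
            exact step_dirs hstep
          · intro k hk
            set a : Fin m := ⟨k, by omega⟩ with ha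
            set b : Fin m := ⟨k+1, hk⟩ with hb
            show (p b.succ - p b.castSucc) + (p a.succ - p a.castSucc) ≠ 0
            have hba : b.castSucc = a.succ := by
              ext
              simp [ha, hb]
            rw [hba, sub_add_sub_cancel]
            intro h0
            have := hinj (sub_eq_zero.mp h0)
            rw [Fin.ext_iff] at this
            simp only [Fin.val_succ, Fin.coe_castSucc, ha, hb] at this
            omega
        refine Set.mem_biUnion hcC ?_
        simp only [Set.mem_setOf_eq, hdecc]
        exact ⟨hsa, hmin⟩
      have hmeas : P {x | ¬HasFiniteContext x i} ≤
          (Codes.card : ENNReal) * ENNReal.ofReal (q ^ (m+1)) := by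
        refine le_trans (measure_mono hsub) ?_
        refine le_trans (measure_biUnion_finset_le Codes _) ?_
        have hone : ∀ c ∈ Codes,
            P {x : Conf | IsSAPath (decPath m c) ∧ ∀ k, x (decPath m c k) = false} ≤
              ENNReal.ofReal (q ^ (m+1)) := by
          intro c _
          by_cases hsa : IsSAPath (decPath m c)
          · refine le_trans (measure_mono ?_) (hbound (m+1) (by omega) _ hsa)
            intro x hx; exact hx.2
          · have h0 : {x : Conf | IsSAPath (decPath m c) ∧ ∀ k, x (decPath m c k) = false}
                ⊆ (∅ : Set Conf) := fun x hx => absurd hx.1 hsa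
            exact le_trans (measure_mono h0) (by simp)
        refine le_trans (Finset.sum_le_sum hone) ?_
        rw [Finset.sum_const, nsmul_eq_mul]
      have hcard : Codes.card ≤ 16 * 3 ^ m := by
        rw [hCodes, Finset.card_product]
        calc (nbhd i).card * (NBF m).card ≤ 4 * (4 * 3 ^ m) :=
              Nat.mul_le_mul (nbhd_card i) (NBF_card m)
          _ = 16 * 3 ^ m := by ring
      refine le_trans hmeas ?_
      rw [show ((Codes.card : ENNReal)) = ENNReal.ofReal (Codes.card) from
        (ENNReal.ofReal_natCast _).symm, ← ENNReal.ofReal_mul (by positivity)]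
      apply ENNReal.ofReal_le_ofReal
      have h1 : (Codes.card : ℝ) ≤ 16 * 3 ^ m := by exact_mod_cast hcard
      have h2 : (0:ℝ) ≤ q ^ (m+1) := pow_nonneg hq0 _
      calc (Codes.card : ℝ) * q^(m+1) ≤ (16 * (3:ℝ)^m) * q^(m+1) := by
            apply mul_le_mul_of_nonneg_right _ h2
            exact_mod_cast h1
        _ = (16*q) * (3*q)^m := by rw [mul_pow]; ring
    have htend : Filter.Tendsto (fun m : ℕ => ENNReal.ofReal ((16 * q) * (3 * q) ^ m))
        Filter.atTop (nhds 0) := by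
      have h3q : 3 * q < 1 := by linarith
      have hp := tendsto_pow_atTop_nhds_zero_of_lt_one (by linarith : (0:ℝ) ≤ 3 * q) h3q
      have h2 := hp.const_mul (16 * q)
      rw [mul_zero] at h2
      have h3 := ENNReal.tendsto_ofReal h2
      simpa using h3
    exact le_zero_iff.mp (ge_of_tendsto' htend hbnd)
  have hc : P ({x : Conf | ∀ i : Site, HasFiniteContext x i}ᶜ) = 0 := by
    have heq : {x : Conf | ∀ i : Site, HasFiniteContext x i}ᶜ =
        ⋃ i : Site, {x : Conf | ¬ HasFiniteContext x i} := by
      ext x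
      simp [not_forall]
    rw [heq]
    refine le_antisymm (le_trans (measure_iUnion_le _) ?_) (zero_le)
    simp [key]
  have h2 := measure_union_le (μ := P) {x : Conf | ∀ i : Site, HasFiniteContext x i}
    ({x : Conf | ∀ i : Site, HasFiniteContext x i}ᶜ)
  rw [Set.union_compl_self, hc, add_zero, measure_univ] at h2
  exact le_antisymm prob_le_one h2

end
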